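/- arXiv:1901.07070 — 5 statements merged into one kernel-verified Lean document; each statement's English description precedes it below -/
import Mathlib

section
/- In any list schedule of a DAG on m processors, there exists a directed chain of tasks from source to sink such that at every time instant during the schedule at which some processor is idle, a task on this chain is executing; consequently the total idle time I satisfies I ≤ (m−1)·L where L is the static cost of that chain. -/
/-!
Start from a task `v₀` finishing last and walk backwards. If a processor is idle at an
instant `t < τ v`, then `v` is not ready at `t`, so some predecessor of `v` is unfinished at
`t`, and `t` precedes the completion of the predecessor `u` finishing last. Hence the idle
instants before `τ v + c v` are covered by `v` itself or, recursively, by a chain ending at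
`u`. At an idle instant the processor of the covering chain task is busy, so at most `m - 1`
processors are idle; integrating over time gives `I ≤ (m - 1) L`.
-/

open MeasureTheory Finset

theorem List.IsChain.nodup_of_rel_lt {α β : Type*} [Preorder β] {R : α → α → Prop}
    {f : α → β} (hR : ∀ a b, R a b → f a < f b) {l : List α} (hl : l.IsChain R) : l.Nodup :=
  List.Nodup.of_map f ((List.isChain_map f).mpr (hl.imp fun a b => hR a b)).pairwise.nodup

theorem volume_toReal_le_sum_of_subset_biUnion_Ico {ι : Type*} {S : Set ℝ} {s : Finset ι}
    {a ℓ : ι → ℝ} (hℓ : ∀ i ∈ s, 0 ≤ ℓ i) (hS : S ⊆ ⋃ i ∈ s, Set.Ico (a i) (a i + ℓ i)) :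
    (volume S).toReal ≤ ∑ i ∈ s, ℓ i := by
  refine ENNReal.toReal_le_of_le_ofReal (sum_nonneg hℓ) ?_
  calc volume S ≤ ∑ i ∈ s, volume (Set.Ico (a i) (a i + ℓ i)) :=
        (measure_mono hS).trans (measure_biUnion_finset_le _ _)
    _ = ENNReal.ofReal (∑ i ∈ s, ℓ i) := by
        rw [ENNReal.ofReal_sum_of_nonneg hℓ]
        simp [Real.volume_Ico]

theorem sum_sum_filter_ne_eq {ι κ : Type*} [Fintype κ] [Nonempty κ] [DecidableEq κ]
    (s : Finset ι) (f : ι → κ) (g : ι → ℝ) :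
    ∑ k, ∑ i ∈ s with f i ≠ k, g i = ((Fintype.card κ : ℝ) - 1) * ∑ i ∈ s, g i := by
  simp_rw [sum_filter]
  rw [sum_comm, mul_sum]
  refine sum_congr rfl fun i _ => ?_
  simp [sum_ite, filter_ne, Nat.cast_pred Fintype.card_pos]

theorem exists_chain_covering_idle {V : Type*} [Finite V] {E : V → V → Prop} {c τ : V → ℝ}
    {Idle : ℝ → Prop} (hc : ∀ v, 0 < c v) (hE : ∀ u v, E u v → τ u + c u ≤ τ v)
    (hready : ∀ t v, Idle t → t < τ v → ∃ u, E u v ∧ t < τ u + c u) (v : V) :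
    ∃ l : List V, l.IsChain E ∧ l.getLast? = some v ∧
      ∀ t, Idle t → t < τ v + c v → ∃ u ∈ l, t ∈ Set.Ico (τ u) (τ u + c u) := by
  have hwf : WellFounded (fun u v => τ u < τ v) :=
    Set.wellFoundedOn_range.mp (Set.finite_range τ).wellFoundedOn
  induction v using hwf.induction with
  | _ v ih =>
  by_cases hpred : ∃ u, E u v
  · have : Nonempty {u // E u v} := let ⟨u, hu⟩ := hpred; ⟨⟨u, hu⟩⟩
    obtain ⟨⟨u, huv⟩, hmax⟩ := Finite.exists_max fun w : {w // E w v} => τ w + c w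
    obtain ⟨l, hl, hlast, hcover⟩ := ih u (by linarith [hc u, hE u v huv])
    refine ⟨l ++ [v], hl.append (List.isChain_singleton v) (by simp [hlast, huv]),
      List.getLast?_concat, fun t ht htv => ?_⟩
    by_cases hvt : τ v ≤ t
    · exact ⟨v, by simp, hvt, htv⟩
    by_cases hut : t < τ u + c u
    · obtain ⟨w, hw, hwt⟩ := hcover t ht hut
      exact ⟨w, List.mem_append_left _ hw, hwt⟩
    obtain ⟨w, hwv, hwt⟩ := hready t v ht (not_le.mp hvt)
    linarith [hmax ⟨w, hwv⟩]
  · refine ⟨[v], List.isChain_singleton v, rfl, fun t ht htv => ?_⟩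
    by_cases hvt : τ v ≤ t
    · exact ⟨v, by simp, hvt, htv⟩
    obtain ⟨w, hwv, -⟩ := hready t v ht (not_le.mp hvt)
    exact absurd ⟨w, hwv⟩ hpred

theorem stmt_4_general {V : Type*} [Fintype V] [Nonempty V]
    (E : V → V → Prop) (c τ : V → ℝ) (m : ℕ) (proc : V → Fin m)
    (hpos : ∀ v, 0 < c v)
    (hprec : ∀ u v, E u v → τ u + c u ≤ τ v)
    (M : ℝ)
    (hM : M = Finset.univ.sup' Finset.univ_nonempty (fun v => τ v + c v))
    -- list-scheduling property: no processor is idle while some ready task is unscheduled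
    (hlist : ∀ t : ℝ, 0 ≤ t → t < M →
      (∃ v, t < τ v ∧ ∀ u, E u v → τ u + c u ≤ t) →
      ∀ p : Fin m, ∃ v, proc v = p ∧ τ v ≤ t ∧ t < τ v + c v)
    (I : ℝ)
    (hI : I = ∑ p : Fin m, (MeasureTheory.volume
      {t : ℝ | t ∈ Set.Ico (0 : ℝ) M ∧
        ∀ v, proc v = p → t ∉ Set.Ico (τ v) (τ v + c v)}).toReal) :
    ∃ l : List V, l.Chain' E ∧
      (∀ t : ℝ, 0 ≤ t → t < M →
        (∃ p : Fin m, ∀ v, proc v = p → ¬ (τ v ≤ t ∧ t < τ v + c v)) →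
        ∃ v ∈ l, τ v ≤ t ∧ t < τ v + c v) ∧
      I ≤ ((m : ℝ) - 1) * (l.map c).sum := by
  classical
  let Idle (t : ℝ) : Prop :=
    0 ≤ t ∧ t < M ∧ ∃ p : Fin m, ∀ v, proc v = p → ¬ (τ v ≤ t ∧ t < τ v + c v)
  have hready : ∀ t v, Idle t → t < τ v → ∃ u, E u v ∧ t < τ u + c u := by
    rintro t v ⟨h0, htM, p, hp⟩ htv
    by_contra! hfinished
    obtain ⟨w, rfl, hw⟩ := hlist t h0 htM ⟨v, htv, hfinished⟩ p
    exact hp w rfl hw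
  obtain ⟨v₀, -, hv₀⟩ := exists_mem_eq_sup' univ_nonempty fun v => τ v + c v
  obtain ⟨l, hl, -, hcover⟩ := exists_chain_covering_idle hpos hprec hready v₀
  have hcover' : ∀ t : ℝ, 0 ≤ t → t < M →
      (∃ p : Fin m, ∀ v, proc v = p → ¬ (τ v ≤ t ∧ t < τ v + c v)) →
      ∃ v ∈ l, τ v ≤ t ∧ t < τ v + c v := fun t h0 htM hidle =>
    hcover t ⟨h0, htM, hidle⟩ (hv₀ ▸ hM ▸ htM)
  refine ⟨l, hl, hcover', ?_⟩
  have hnodup : l.Nodup :=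
    hl.nodup_of_rel_lt (f := τ) fun u v huv => by linarith [hpos u, hprec u v huv]
  calc I ≤ ∑ p : Fin m, ∑ v ∈ l.toFinset with proc v ≠ p, c v := by
        rw [hI]
        refine sum_le_sum fun p _ =>
          volume_toReal_le_sum_of_subset_biUnion_Ico (a := τ) (fun v _ => (hpos v).le) ?_
        rintro t ⟨⟨h0, htM⟩, hidle⟩
        obtain ⟨v, hvl, hvt⟩ := hcover' t h0 htM ⟨p, fun v hv => hidle v hv⟩
        exact Set.mem_biUnion (mem_filter.mpr ⟨List.mem_toFinset.mpr hvl,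
          fun hvp => hidle v hvp hvt⟩) hvt
    _ = ((m : ℝ) - 1) * (l.map c).sum := by
        have : Nonempty (Fin m) := ⟨proc v₀⟩
        rw [sum_sum_filter_ne_eq, Fintype.card_fin, List.sum_toFinset _ hnodup]

/-- In any list schedule of a DAG on `m` processors there is a directed chain such that
whenever some processor is idle a task of the chain is executing; consequently the total
idle time `I` satisfies `I ≤ (m - 1) * L` where `L` is the static cost of the chain. -/
theorem stmt_4 {V : Type*} [Fintype V] [Nonempty V]
    (E : V → V → Prop) (c τ : V → ℝ) (m : ℕ) (hm : 0 < m) (proc : V → Fin m)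
    (hpos : ∀ v, 0 < c v) (hstart : ∀ v, 0 ≤ τ v)
    (hdisj : ∀ u v, u ≠ v → proc u = proc v → τ u + c u ≤ τ v ∨ τ v + c v ≤ τ u)
    (hprec : ∀ u v, E u v → τ u + c u ≤ τ v)
    (M : ℝ)
    (hM : M = Finset.univ.sup' Finset.univ_nonempty (fun v => τ v + c v))
    -- list-scheduling property: no processor is idle while some ready task is unscheduled
    (hlist : ∀ t : ℝ, 0 ≤ t → t < M →
      (∃ v, t < τ v ∧ ∀ u, E u v → τ u + c u ≤ t) →
      ∀ p : Fin m, ∃ v, proc v = p ∧ τ v ≤ t ∧ t < τ v + c v)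
    (I : ℝ)
    (hI : I = ∑ p : Fin m, (MeasureTheory.volume
      {t : ℝ | t ∈ Set.Ico (0 : ℝ) M ∧
        ∀ v, proc v = p → t ∉ Set.Ico (τ v) (τ v + c v)}).toReal) :
    ∃ l : List V, l.Chain' E ∧
      (∀ t : ℝ, 0 ≤ t → t < M →
        (∃ p : Fin m, ∀ v, proc v = p → ¬ (τ v ≤ t ∧ t < τ v + c v)) →
        ∃ v ∈ l, τ v ≤ t ∧ t < τ v + c v) ∧
      I ≤ ((m : ℝ) - 1) * (l.map c).sum :=
  stmt_4_general E c τ m proc hpos hprec M hM hlist I hI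
end

section
/- If there exists a feasible schedule of the DAG on m processors with makespan at most T, then for every subinterval θ ⊆ [0,T), m·|θ| ≥ R(θ), where R(θ) is the minimum density: the sum over all tasks u of the minimum possible overlap of u's execution interval with θ, given that u must end no earlier than mnEnd(u) and start no later than mxStart(u). -/
/-!
Feasibility of the schedule forces every task `u` to finish no earlier than `mnEnd u` and to
start no later than `mxStart u` (both by well-founded induction along the precedence DAG, using
the defining recursions). Hence the actual overlap of `u`'s execution interval with `θ` is at
least its minimum overlap. On each processor the execution intervals are pairwise disjoint, so
their overlaps with `θ` add up to at most `|θ|`; summing over the `m` processors gives `m·|θ|`.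
-/

open MeasureTheory Relation

theorem wellFounded_of_forall_not_transGen_self {V : Type*} [Finite V] {E : V → V → Prop}
    (hacyc : ∀ v, ¬ TransGen E v v) : WellFounded E :=
  haveI : Std.Irrefl (TransGen E) := ⟨hacyc⟩
  Subrelation.wf TransGen.single (Finite.wellFounded_of_trans_of_irrefl (TransGen E))

section Schedule

variable {V : Type*} [Fintype V] {E : V → V → Prop} [DecidableRel E] {c τ : V → ℝ}

theorem mnEnd_le_finish (hwf : WellFounded E) {mnEnd : V → ℝ}
    (hrecE : ∀ u, mnEnd u = c u +
      (insert (0 : ℝ) ((Finset.univ.filter fun v => E v u).image mnEnd)).max'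
        (Finset.insert_nonempty _ _))
    (hstart : ∀ v, 0 ≤ τ v) (hprec : ∀ u v, E u v → τ u + c u ≤ τ v) (u : V) :
    mnEnd u ≤ τ u + c u := by
  induction u using hwf.induction with
  | _ u ih =>
    rw [hrecE u, add_comm (c u)]
    gcongr
    refine Finset.max'_le _ _ _ ?_
    simp only [Finset.forall_mem_insert, Finset.mem_image, Finset.mem_filter,
      Finset.mem_univ, true_and, forall_exists_index, and_imp, forall_apply_eq_imp_iff₂]
    exact ⟨hstart u, fun v hv => (ih v hv).trans (hprec v u hv)⟩

theorem start_le_mxStart (hwf : WellFounded (flip E)) {T : ℝ} {mxStart : V → ℝ}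
    (hrecS : ∀ u, mxStart u =
      (insert (T - c u)
        ((Finset.univ.filter fun v => E u v).image (fun v => mxStart v - c u))).min'
        (Finset.insert_nonempty _ _))
    (hprec : ∀ u v, E u v → τ u + c u ≤ τ v) (hmk : ∀ v, τ v + c v ≤ T) (u : V) :
    τ u ≤ mxStart u := by
  induction u using hwf.induction with
  | _ u ih =>
    rw [hrecS u]
    refine Finset.le_min' _ _ _ ?_
    simp only [Finset.forall_mem_insert, Finset.mem_image, Finset.mem_filter,
      Finset.mem_univ, true_and, forall_exists_index, and_imp, forall_apply_eq_imp_iff₂]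
    refine ⟨by linarith [hmk u], fun v hv => ?_⟩
    linarith [ih v hv, hprec u v hv]

end Schedule

theorem minOverlap_le_measureReal_inter {e S s d ti tj : ℝ} (he : e ≤ s + d) (hS : s ≤ S) :
    max 0 (min (min (e - ti) d) (min (tj - S) (tj - ti)))
      ≤ volume.real (Set.Ico s (s + d) ∩ Set.Ico ti tj) := by
  rw [Set.Ico_inter_Ico, Real.volume_real_Ico, max_comm _ (0 : ℝ)]
  refine max_le_max le_rfl ?_
  have hx := le_refl (min (min (e - ti) d) (min (tj - S) (tj - ti)))
  simp only [le_min_iff] at hx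
  obtain ⟨⟨h₁, h₂⟩, h₃, h₄⟩ := hx
  rcases min_cases (s + d) tj with ⟨h, -⟩ | ⟨h, -⟩ <;>
    rcases max_cases s ti with ⟨h', -⟩ | ⟨h', -⟩ <;> rw [h, h'] <;> linarith

theorem sum_measureReal_inter_le {α ι : Type*} [MeasurableSpace α] {μ : Measure α}
    {s : Finset ι} {A : ι → Set α} {W : Set α} (hdisj : (s : Set ι).PairwiseDisjoint A)
    (hA : ∀ i ∈ s, MeasurableSet (A i)) (hW : MeasurableSet W) (hW' : μ W ≠ ⊤) :
    ∑ i ∈ s, μ.real (A i ∩ W) ≤ μ.real W := by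
  have hfin : ∀ i ∈ s, μ (A i ∩ W) ≠ ⊤ := fun i _ =>
    ne_top_of_le_ne_top hW' (measure_mono Set.inter_subset_right)
  rw [← measureReal_biUnion_finset (hdisj.mono fun i => Set.inter_subset_left)
    (fun i hi => (hA i hi).inter hW) hfin]
  exact measureReal_mono (Set.iUnion₂_subset fun i _ => Set.inter_subset_right) hW'

theorem stmt_10_general {V : Type*} [Fintype V]
    (E : V → V → Prop) [DecidableRel E]
    (hacyc : ∀ v, ¬ Relation.TransGen E v v)
    (c : V → ℝ)
    (T : ℝ) (mnEnd mxStart : V → ℝ)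
    (hrecE : ∀ u, mnEnd u = c u +
      (insert (0 : ℝ) ((Finset.univ.filter fun v => E v u).image mnEnd)).max'
        (Finset.insert_nonempty _ _))
    (hrecS : ∀ u, mxStart u =
      (insert (T - c u)
        ((Finset.univ.filter fun v => E u v).image (fun v => mxStart v - c u))).min'
        (Finset.insert_nonempty _ _))
    (m : ℕ) (τ : V → ℝ) (proc : V → Fin m)
    (hstart : ∀ v, 0 ≤ τ v)
    (hdisj : ∀ u v, u ≠ v → proc u = proc v → τ u + c u ≤ τ v ∨ τ v + c v ≤ τ u)
    (hprec : ∀ u v, E u v → τ u + c u ≤ τ v)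
    (hmk : ∀ v, τ v + c v ≤ T)
    (ti tj : ℝ) (hij : ti ≤ tj) :
    (∑ u, max 0 (min (min (mnEnd u - ti) (c u)) (min (tj - mxStart u) (tj - ti))))
      ≤ (m : ℝ) * (tj - ti) := by
  set θ := Set.Ico ti tj
  have hwf := wellFounded_of_forall_not_transGen_self hacyc
  have hwf' : WellFounded (flip E) := wellFounded_of_forall_not_transGen_self fun v h =>
    hacyc v (transGen_swap.mp h)
  have hproc (p : Fin m) : ∑ u with proc u = p, volume.real (Set.Ico (τ u) (τ u + c u) ∩ θ)
      ≤ tj - ti := by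
    refine (sum_measureReal_inter_le (fun u hu v hv huv => ?_) (fun _ _ => measurableSet_Ico)
      measurableSet_Ico (by simp)).trans (by simp [hij])
    simp only [Finset.coe_filter, Finset.mem_univ, true_and, Set.mem_ofPred_eq] at hu hv
    rw [Function.onFun, Set.Ico_disjoint_Ico]
    rcases hdisj u v huv (hu.trans hv.symm) with h | h
    · exact (min_le_left _ _).trans (h.trans (le_max_right _ _))
    · exact (min_le_right _ _).trans (h.trans (le_max_left _ _))
  calc _ ≤ ∑ u, volume.real (Set.Ico (τ u) (τ u + c u) ∩ θ) :=
        Finset.sum_le_sum fun u _ => minOverlap_le_measureReal_inter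
          (mnEnd_le_finish hwf hrecE hstart hprec u) (start_le_mxStart hwf' hrecS hprec hmk u)
    _ = ∑ p : Fin m, ∑ u with proc u = p, volume.real (Set.Ico (τ u) (τ u + c u) ∩ θ) :=
        (Finset.sum_fiberwise _ proc _).symm
    _ ≤ ∑ _p : Fin m, (tj - ti) := Finset.sum_le_sum fun p _ => hproc p
    _ = m * (tj - ti) := by simp [mul_sub]

/-- If there is a feasible schedule on `m` processors with makespan at most `T`, then for
every subinterval `θ = [ti, tj) ⊆ [0, T)` we have `R(θ) ≤ m * |θ|`, where `R(θ)` is the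
minimum density: the sum over all tasks `u` of the minimum possible overlap of `u`'s
execution interval with `θ`, given that `u` ends no earlier than `mnEnd u` and starts no
later than `mxStart u`. -/
theorem stmt_10 {V : Type*} [Fintype V] [DecidableEq V]
    (E : V → V → Prop) [DecidableRel E]
    (hacyc : ∀ v, ¬ Relation.TransGen E v v)
    (c : V → ℝ) (hpos : ∀ v, 0 < c v)
    (T : ℝ) (mnEnd mxStart : V → ℝ)
    (hrecE : ∀ u, mnEnd u = c u +
      (insert (0 : ℝ) ((Finset.univ.filter fun v => E v u).image mnEnd)).max'
        (Finset.insert_nonempty _ _))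
    (hrecS : ∀ u, mxStart u =
      (insert (T - c u)
        ((Finset.univ.filter fun v => E u v).image (fun v => mxStart v - c u))).min'
        (Finset.insert_nonempty _ _))
    (m : ℕ) (τ : V → ℝ) (proc : V → Fin m)
    (hstart : ∀ v, 0 ≤ τ v)
    (hdisj : ∀ u v, u ≠ v → proc u = proc v → τ u + c u ≤ τ v ∨ τ v + c v ≤ τ u)
    (hprec : ∀ u v, E u v → τ u + c u ≤ τ v)
    (hmk : ∀ v, τ v + c v ≤ T)
    (ti tj : ℝ) (h0 : 0 ≤ ti) (hij : ti ≤ tj) (hjT : tj ≤ T) :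
    (∑ u, max 0 (min (min (mnEnd u - ti) (c u)) (min (tj - mxStart u) (tj - ti))))
      ≤ (m : ℝ) * (tj - ti) :=
  stmt_10_general E hacyc c T mnEnd mxStart hrecE hrecS m τ proc hstart hdisj hprec hmk ti tj hij
end

section
/- If m < m_L(T) := max over subintervals θ ⊆ [0,T) of ⌈R(θ)/|θ|⌉, then no feasible schedule on m processors has makespan at most T; hence T+1 is a lower bound candidate, and the Fujita bound (the largest T with m < m_L(T), plus one) is a valid lower bound on the optimal makespan. -/
/-- A feasible schedule of the weighted graph `(E, c)` on `m` identical processors. -/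
def Feasible {V : Type*} (E : V → V → Prop) (c : V → ℝ) {m : ℕ}
    (τ : V → ℝ) (proc : V → Fin m) : Prop :=
  (∀ v, 0 ≤ τ v) ∧
  (∀ u v, u ≠ v → proc u = proc v → τ u + c u ≤ τ v ∨ τ v + c v ≤ τ u) ∧
  (∀ u v, E u v → τ u + c u ≤ τ v)

/-- Key arithmetic fact used in the interval induction. -/
private lemma arith_key (a cu ti tj : ℝ) :
    max 0 (min (a + cu) tj - max a ti) + max 0 (min tj a - ti) ≤ max 0 (tj - ti) := by
  simp only [max_def, min_def]
  split_ifs <;> linarith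

/-- Sum of overlaps of pairwise-disjoint intervals with `[ti, tj]` is at most
its (nonnegative) length. -/
private lemma sum_overlap_le {V : Type*} [DecidableEq V] (τ c : V → ℝ)
    (hc : ∀ v, 0 < c v) :
    ∀ n (S : Finset V), S.card ≤ n →
      (∀ u ∈ S, ∀ v ∈ S, u ≠ v → τ u + c u ≤ τ v ∨ τ v + c v ≤ τ u) →
      ∀ ti tj : ℝ,
        ∑ u ∈ S, max 0 (min (τ u + c u) tj - max (τ u) ti) ≤ max 0 (tj - ti) := by
  intro n
  induction n with
  | zero =>
    intro S hcard _ ti tj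
    have : S = ∅ := Finset.card_eq_zero.mp (Nat.le_zero.mp hcard)
    simp [this]
  | succ n ih =>
    intro S hcard hdisj ti tj
    rcases S.eq_empty_or_nonempty with rfl | hne
    · simp
    obtain ⟨u, huS, hmax⟩ := Finset.exists_max_image S τ hne
    rw [← Finset.sum_erase_add S _ huS]
    set tj' := min tj (τ u) with htj'
    have hrw : ∀ v ∈ S.erase u,
        max 0 (min (τ v + c v) tj - max (τ v) ti)
          = max 0 (min (τ v + c v) tj' - max (τ v) ti) := by
      intro v hv
      have hvS : v ∈ S := Finset.mem_of_mem_erase hv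
      have hvne : v ≠ u := Finset.ne_of_mem_erase hv
      have hle : τ v + c v ≤ τ u := by
        rcases hdisj u huS v hvS (Ne.symm hvne) with h | h
        · exfalso
          have := hmax v hvS
          have := hc u
          linarith
        · exact h
      have : min (τ v + c v) tj' = min (τ v + c v) tj := by
        rw [htj', min_comm tj (τ u), ← min_assoc, min_eq_left hle]
      rw [this]
    rw [Finset.sum_congr rfl hrw]
    have hcard' : (S.erase u).card ≤ n := by
      rw [Finset.card_erase_of_mem huS]
      omega
    have hdisj' : ∀ x ∈ S.erase u, ∀ y ∈ S.erase u, x ≠ y →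
        τ x + c x ≤ τ y ∨ τ y + c y ≤ τ x := fun x hx y hy hxy =>
      hdisj x (Finset.mem_of_mem_erase hx) y (Finset.mem_of_mem_erase hy) hxy
    have h1 := ih (S.erase u) hcard' hdisj' ti tj'
    have h2 := arith_key (τ u) (c u) ti tj
    calc ∑ v ∈ S.erase u, max 0 (min (τ v + c v) tj' - max (τ v) ti)
          + max 0 (min (τ u + c u) tj - max (τ u) ti)
        ≤ max 0 (tj' - ti) + max 0 (min (τ u + c u) tj - max (τ u) ti) := by
          linarith
      _ ≤ max 0 (tj - ti) := by rw [htj'] at *; linarith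

/-- If `m < m_L(T)`, i.e. some subinterval `θ ⊆ [0, T)` has minimum density exceeding
`m * |θ|`, then no feasible schedule on `m` processors has makespan at most `T`; hence
`T + 1` lower-bounds every (integral) achievable makespan, validating the Fujita bound. -/
theorem stmt_11 {V : Type*} [Fintype V] [Nonempty V] [DecidableEq V]
    (E : V → V → Prop) [DecidableRel E]
    (hacyc : ∀ v, ¬ Relation.TransGen E v v)
    (c : V → ℝ) (hpos : ∀ v, 0 < c v) (hint : ∀ v, ∃ k : ℕ, c v = (k : ℝ))
    (m : ℕ) (hm : 0 < m) (T : ℕ)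
    (mnEnd mxStart : V → ℝ)
    (hrecE : ∀ u, mnEnd u = c u +
      (insert (0 : ℝ) ((Finset.univ.filter fun v => E v u).image mnEnd)).max'
        (Finset.insert_nonempty _ _))
    (hrecS : ∀ u, mxStart u =
      (insert ((T : ℝ) - c u)
        ((Finset.univ.filter fun v => E u v).image (fun v => mxStart v - c u))).min'
        (Finset.insert_nonempty _ _))
    (hbad : ∃ ti tj : ℝ, 0 ≤ ti ∧ ti < tj ∧ tj ≤ (T : ℝ) ∧
      (m : ℝ) * (tj - ti) <
        ∑ u, max 0 (min (min (mnEnd u - ti) (c u)) (min (tj - mxStart u) (tj - ti)))) :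
    (∀ (τ : V → ℝ) (proc : V → Fin m), Feasible E c τ proc →
      ∃ v, (T : ℝ) < τ v + c v) ∧
    (∀ OPT : ℕ, (∃ (τ : V → ℝ) (proc : V → Fin m), Feasible E c τ proc ∧
      ∀ v, τ v + c v ≤ (OPT : ℝ)) → T + 1 ≤ OPT) := by
  obtain ⟨ti, tj, hti0, htij, htjT, hsum⟩ := hbad
  -- Core claim: no feasible schedule finishes all jobs by time T.
  have key : ∀ (τ : V → ℝ) (proc : V → Fin m), Feasible E c τ proc →
      ∃ v, (T : ℝ) < τ v + c v := by
    intro τ proc hfeas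
    by_contra h
    push_neg at h
    obtain ⟨hnn, hproc, hprec⟩ := hfeas
    -- well-foundedness of the precedence relation and its reverse
    haveI : IsIrrefl V (Relation.TransGen E) := ⟨hacyc⟩
    haveI : IsIrrefl V (Relation.TransGen (Function.swap E)) :=
      ⟨fun v hv => hacyc v (Relation.transGen_swap.mp hv)⟩
    have wf : WellFounded (Relation.TransGen E) :=
      Finite.wellFounded_of_trans_of_irrefl _
    have wf' : WellFounded (Relation.TransGen (Function.swap E)) :=
      Finite.wellFounded_of_trans_of_irrefl _
    -- every job finishes no earlier than mnEnd
    have hmn : ∀ u, mnEnd u ≤ τ u + c u := by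
      intro u
      refine wf.induction (C := fun u => mnEnd u ≤ τ u + c u) u ?_
      intro x ihx
      rw [hrecE x]
      have : (insert (0 : ℝ) ((Finset.univ.filter fun v => E v x).image mnEnd)).max'
          (Finset.insert_nonempty _ _) ≤ τ x := by
        apply Finset.max'_le
        intro y hy
        rcases Finset.mem_insert.mp hy with rfl | hy
        · exact hnn x
        · obtain ⟨v, hv, rfl⟩ := Finset.mem_image.mp hy
          have hEvx : E v x := (Finset.mem_filter.mp hv).2
          have h1 := ihx v (Relation.TransGen.single hEvx)
          have h2 := hprec v x hEvx
          linarith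
      linarith
    -- every job starts no later than mxStart
    have hmx : ∀ u, τ u ≤ mxStart u := by
      intro u
      refine wf'.induction (C := fun u => τ u ≤ mxStart u) u ?_
      intro x ihx
      rw [hrecS x]
      apply Finset.le_min'
      intro y hy
      rcases Finset.mem_insert.mp hy with rfl | hy
      · have := h x; linarith
      · obtain ⟨v, hv, rfl⟩ := Finset.mem_image.mp hy
        have hExv : E x v := (Finset.mem_filter.mp hv).2
        have h1 := ihx v (Relation.TransGen.single hExv)
        have h2 := hprec x v hExv
        linarith
    -- the demanded work lower-bounds each job's overlap with [ti, tj]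
    have hterm : ∀ u : V,
        max 0 (min (min (mnEnd u - ti) (c u)) (min (tj - mxStart u) (tj - ti)))
          ≤ max 0 (min (τ u + c u) tj - max (τ u) ti) := by
      intro u
      apply max_le_max le_rfl
      have h1 : min (min (mnEnd u - ti) (c u)) (min (tj - mxStart u) (tj - ti))
          ≤ mnEnd u - ti := (min_le_left _ _).trans (min_le_left _ _)
      have h2 : min (min (mnEnd u - ti) (c u)) (min (tj - mxStart u) (tj - ti))
          ≤ c u := (min_le_left _ _).trans (min_le_right _ _)
      have h3 : min (min (mnEnd u - ti) (c u)) (min (tj - mxStart u) (tj - ti))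
          ≤ tj - mxStart u := (min_le_right _ _).trans (min_le_left _ _)
      have h4 : min (min (mnEnd u - ti) (c u)) (min (tj - mxStart u) (tj - ti))
          ≤ tj - ti := (min_le_right _ _).trans (min_le_right _ _)
      have h5 := hmn u
      have h6 := hmx u
      rcases max_cases (τ u) ti with ⟨he, hle⟩ | ⟨he, hle⟩ <;>
        rcases min_cases (τ u + c u) tj with ⟨he2, hle2⟩ | ⟨he2, hle2⟩ <;>
        rw [he, he2] <;> linarith
    -- total overlap is at most m * (tj - ti), grouping jobs by processor
    have hgroup : ∑ u : V, max 0 (min (τ u + c u) tj - max (τ u) ti)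
        ≤ (m : ℝ) * (tj - ti) := by
      rw [← Finset.sum_fiberwise Finset.univ proc
        (fun u => max 0 (min (τ u + c u) tj - max (τ u) ti))]
      have hbound : ∀ p : Fin m,
          ∑ u ∈ Finset.univ.filter (fun u => proc u = p),
            max 0 (min (τ u + c u) tj - max (τ u) ti) ≤ max 0 (tj - ti) := by
        intro p
        apply sum_overlap_le τ c hpos (Finset.univ.filter (fun u => proc u = p)).card
          _ le_rfl
        intro x hx y hy hxy
        have hpx : proc x = p := (Finset.mem_filter.mp hx).2
        have hpy : proc y = p := (Finset.mem_filter.mp hy).2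
        exact hproc x y hxy (hpx.trans hpy.symm)
      calc ∑ p : Fin m, ∑ u ∈ Finset.univ.filter (fun u => proc u = p),
            max 0 (min (τ u + c u) tj - max (τ u) ti)
          ≤ ∑ _p : Fin m, max 0 (tj - ti) := Finset.sum_le_sum fun p _ => hbound p
        _ = (m : ℝ) * max 0 (tj - ti) := by
            rw [Finset.sum_const, Finset.card_univ, Fintype.card_fin, nsmul_eq_mul]
        _ = (m : ℝ) * (tj - ti) := by rw [max_eq_right (by linarith)]
    have := Finset.sum_le_sum (fun u (_ : u ∈ Finset.univ) => hterm u)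
    linarith
  constructor
  · exact key
  · intro OPT ⟨τ, proc, hfeas, hopt⟩
    by_contra hOPT
    push_neg at hOPT
    have hOT : OPT ≤ T := by omega
    obtain ⟨v, hv⟩ := key τ proc hfeas
    have := hopt v
    have : (OPT : ℝ) ≤ (T : ℝ) := Nat.cast_le.mpr hOT
    linarith [hopt v]
end

section
/- The Fernandez bound is valid: for any m and weighted DAG, the optimal makespan on m processors is at least t_cp + q, where q = max over subintervals θ ⊆ [0,t_cp) of ⌈R(θ)/m − |θ|⌉ (with R computed using deadline T = t_cp). -/
open MeasureTheory Set

lemma wellFounded_of_acyclic {V : Type*} [Finite V] {E : V → V → Prop}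
    (hacyc : ∀ v, ¬ Relation.TransGen E v v) : WellFounded E :=
  have : Std.Irrefl (Relation.TransGen E) := ⟨hacyc⟩
  Subrelation.wf Relation.TransGen.single (Finite.wellFounded_of_trans_of_irrefl _)

lemma floor_add_natCast_le_floor {x y : ℝ} {k : ℕ} (h : x + k ≤ y) :
    (⌊x⌋ : ℝ) + k ≤ ⌊y⌋ := by
  have := Int.floor_le_floor h
  rw [Int.floor_add_natCast] at this
  exact_mod_cast this

lemma Int.ceil_div_sub_le_of_le_mul {R L m : ℝ} {z : ℤ} (hm : 0 < m) (h : R ≤ m * (L + z)) :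
    ⌈R / m - L⌉ ≤ z :=
  Int.ceil_le.mpr <| sub_le_iff_le_add.mpr <| (div_le_iff₀ hm).mpr (by linarith)

lemma exists_natCast_eq_sum_map {V : Type*} {c : V → ℝ} (hint : ∀ v, ∃ k : ℕ, c v = k) :
    ∀ l : List V, ∃ n : ℕ, (l.map c).sum = n
  | [] => ⟨0, by simp⟩
  | a :: l => by
    obtain ⟨n, hn⟩ := exists_natCast_eq_sum_map hint l
    obtain ⟨k, hk⟩ := hint a
    exact ⟨k + n, by simp [hk, hn]⟩

lemma sum_volume_real_inter_Ico_le {ι : Type*} (s : Finset ι) (st en : ι → ℝ) {a b : ℝ}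
    (hab : a ≤ b) (hdisj : ∀ u ∈ s, ∀ v ∈ s, u ≠ v → en u ≤ st v ∨ en v ≤ st u) :
    ∑ u ∈ s, volume.real (Ico (st u) (en u) ∩ Ico a b) ≤ b - a := by
  have hpair : (s : Set ι).PairwiseDisjoint fun u => Ico (st u) (en u) ∩ Ico a b := by
    intro u hu v hv huv
    refine Disjoint.mono inter_subset_left inter_subset_left (Ico_disjoint_Ico.mpr ?_)
    rcases hdisj u hu v hv huv with h | h
    · exact (min_le_left _ _).trans (h.trans (le_max_right _ _))
    · exact (min_le_right _ _).trans (h.trans (le_max_left _ _))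
  rw [← measureReal_biUnion_finset hpair (fun u _ => measurableSet_Ico.inter measurableSet_Ico)
    fun u _ => ((measure_mono inter_subset_right).trans_lt measure_Ico_lt_top).ne,
    ← Real.volume_real_Ico_of_le hab]
  exact measureReal_mono (iUnion₂_subset fun u _ => inter_subset_right) measure_Ico_lt_top.ne

lemma forcedOverlap_le_volume_real {mnE mxS s p ti tj δ : ℝ}
    (hend : mnE ≤ s + p) (hstart : s ≤ mxS + δ) (hδ : 0 ≤ δ) :
    max 0 (min (min (mnE - ti) p) (min (tj - mxS) (tj - ti))) ≤
      volume.real (Ico s (s + p) ∩ Ico ti (tj + δ)) := by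
  rw [Ico_inter_Ico, Real.volume_real_Ico, max_comm]
  refine max_le_max ?_ le_rfl
  simp only [min_def, max_def]
  split_ifs <;> linarith

lemma Feasible.floor {V : Type*} {E : V → V → Prop} {c : V → ℝ} {m : ℕ} {τ : V → ℝ}
    {proc : V → Fin m} (hint : ∀ v, ∃ k : ℕ, c v = k) (h : Feasible E c τ proc) :
    Feasible E c (fun v => (⌊τ v⌋ : ℝ)) proc := by
  obtain ⟨hτ, hdisj, hprec⟩ := h
  have hfloor : ∀ u v, τ u + c u ≤ τ v → (⌊τ u⌋ : ℝ) + c u ≤ ⌊τ v⌋ := fun u v huv => by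
    obtain ⟨k, hk⟩ := hint u
    rw [hk] at huv ⊢
    exact floor_add_natCast_le_floor huv
  refine ⟨fun v => ?_, fun u v huv hp => (hdisj u v huv hp).imp (hfloor u v) (hfloor v u),
    fun u v huv => hfloor u v (hprec u v huv)⟩
  exact Int.cast_nonneg_iff.mpr (Int.floor_nonneg.mpr (hτ v))

section Schedule

variable {V : Type*} {E : V → V → Prop} {c : V → ℝ} {τ : V → ℝ}

lemma mnEnd_le_end [Fintype V] [DecidableRel E] (hacyc : ∀ v, ¬ Relation.TransGen E v v)
    {mnEnd : V → ℝ}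
    (hrecE : ∀ u, mnEnd u = c u +
      (insert (0 : ℝ) ((Finset.univ.filter fun v => E v u).image mnEnd)).max'
        (Finset.insert_nonempty _ _))
    (hτ : ∀ v, 0 ≤ τ v) (hprec : ∀ u v, E u v → τ u + c u ≤ τ v) (u : V) :
    mnEnd u ≤ τ u + c u := by
  induction u using (wellFounded_of_acyclic hacyc).induction with
  | _ u ih =>
    rw [hrecE u, add_comm (τ u), add_le_add_iff_left]
    refine Finset.max'_le _ _ _ fun y hy => ?_
    rcases Finset.mem_insert.mp hy with rfl | hy
    · exact hτ u
    · obtain ⟨v, hv, rfl⟩ := Finset.mem_image.mp hy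
      have hvu : E v u := (Finset.mem_filter.mp hv).2
      exact (ih v hvu).trans (hprec v u hvu)

lemma start_le_mxStart_add [Fintype V] [DecidableRel E] (hacyc : ∀ v, ¬ Relation.TransGen E v v)
    {tcp : ℝ} {mxStart : V → ℝ}
    (hrecS : ∀ u, mxStart u =
      (insert (tcp - c u)
        ((Finset.univ.filter fun v => E u v).image (fun v => mxStart v - c u))).min'
        (Finset.insert_nonempty _ _))
    {M : ℝ} (hM : ∀ v, τ v + c v ≤ M) (hprec : ∀ u v, E u v → τ u + c u ≤ τ v) (u : V) :
    τ u ≤ mxStart u + (M - tcp) := by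
  have hwf : WellFounded (Function.swap E) :=
    wellFounded_of_acyclic fun v hv => hacyc v (Relation.transGen_swap.mp hv)
  induction u using hwf.induction with
  | _ u ih =>
    rw [hrecS u, ← sub_le_iff_le_add]
    refine Finset.le_min' _ _ _ fun y hy => ?_
    rcases Finset.mem_insert.mp hy with rfl | hy
    · linarith [hM u]
    · obtain ⟨v, hv, rfl⟩ := Finset.mem_image.mp hy
      have huv : E u v := (Finset.mem_filter.mp hv).2
      linarith [ih v huv, hprec u v huv]

lemma start_add_sum_map_le_of_isChain {M : ℝ} (hM : ∀ v, τ v + c v ≤ M)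
    (hprec : ∀ u v, E u v → τ u + c u ≤ τ v) :
    ∀ (a : V) (l : List V), (a :: l).IsChain E → τ a + ((a :: l).map c).sum ≤ M
  | a, [], _ => by simpa using hM a
  | a, b :: l, hl => by
    obtain ⟨hab, hl⟩ := List.isChain_cons_cons.mp hl
    have := start_add_sum_map_le_of_isChain hM hprec b l hl
    simp only [List.map_cons, List.sum_cons] at this ⊢
    linarith [hprec a b hab]

lemma sum_map_le_of_isChain [Nonempty V] (hint : ∀ v, ∃ k : ℕ, c v = k) {M : ℝ}
    (hτ : ∀ v, 0 ≤ τ v) (hM : ∀ v, τ v + c v ≤ M) (hprec : ∀ u v, E u v → τ u + c u ≤ τ v)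
    {l : List V} (hl : l.IsChain E) : (l.map c).sum ≤ M := by
  cases l with
  | nil =>
    obtain ⟨v⟩ := ‹Nonempty V›
    obtain ⟨k, hk⟩ := hint v
    simpa using (add_nonneg (hτ v) (hk ▸ k.cast_nonneg)).trans (hM v)
  | cons a l => linarith [start_add_sum_map_le_of_isChain hM hprec a l hl, hτ a]

lemma sum_forcedOverlap_le [Fintype V] [DecidableRel E] {m : ℕ} {proc : V → Fin m}
    (hacyc : ∀ v, ¬ Relation.TransGen E v v) {tcp : ℝ} {mnEnd mxStart : V → ℝ}
    (hrecE : ∀ u, mnEnd u = c u +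
      (insert (0 : ℝ) ((Finset.univ.filter fun v => E v u).image mnEnd)).max'
        (Finset.insert_nonempty _ _))
    (hrecS : ∀ u, mxStart u =
      (insert (tcp - c u)
        ((Finset.univ.filter fun v => E u v).image (fun v => mxStart v - c u))).min'
        (Finset.insert_nonempty _ _))
    {ti tj : ℝ} (hij : ti ≤ tj) (hfeas : Feasible E c τ proc) {M : ℝ}
    (hM : ∀ v, τ v + c v ≤ M) (htcpM : tcp ≤ M) :
    ∑ u, max 0 (min (min (mnEnd u - ti) (c u)) (min (tj - mxStart u) (tj - ti))) ≤
      m * (tj - ti + (M - tcp)) := by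
  obtain ⟨hτ, hdisj, hprec⟩ := hfeas
  calc ∑ u, max 0 (min (min (mnEnd u - ti) (c u)) (min (tj - mxStart u) (tj - ti)))
      ≤ ∑ u, volume.real (Ico (τ u) (τ u + c u) ∩ Ico ti (tj + (M - tcp))) :=
        Finset.sum_le_sum fun u _ => forcedOverlap_le_volume_real
          (mnEnd_le_end hacyc hrecE hτ hprec u) (start_le_mxStart_add hacyc hrecS hM hprec u)
          (sub_nonneg.mpr htcpM)
    _ = ∑ p : Fin m, ∑ u with proc u = p,
          volume.real (Ico (τ u) (τ u + c u) ∩ Ico ti (tj + (M - tcp))) :=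
        (Finset.sum_fiberwise _ _ _).symm
    _ ≤ ∑ _p : Fin m, (tj + (M - tcp) - ti) := by
        refine Finset.sum_le_sum fun p _ => sum_volume_real_inter_Ico_le _ _ _ (by linarith) ?_
        intro u hu v hv huv
        exact hdisj u v huv ((Finset.mem_filter.mp hu).2.trans (Finset.mem_filter.mp hv).2.symm)
    _ = m * (tj - ti + (M - tcp)) := by simp only [Finset.sum_const, Finset.card_univ,
        Fintype.card_fin, nsmul_eq_mul]; ring

end Schedule

theorem stmt_12_general {V : Type*} [Fintype V] [Nonempty V]
    (E : V → V → Prop) [DecidableRel E]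
    (hacyc : ∀ v, ¬ Relation.TransGen E v v)
    (c : V → ℝ) (hint : ∀ v, ∃ k : ℕ, c v = (k : ℝ))
    (tcp : ℝ)
    (htcp : IsGreatest {x : ℝ | ∃ l : List V, l.Chain' E ∧ (l.map c).sum = x} tcp)
    (mnEnd mxStart : V → ℝ)
    (hrecE : ∀ u, mnEnd u = c u +
      (insert (0 : ℝ) ((Finset.univ.filter fun v => E v u).image mnEnd)).max'
        (Finset.insert_nonempty _ _))
    (hrecS : ∀ u, mxStart u =
      (insert (tcp - c u)
        ((Finset.univ.filter fun v => E u v).image (fun v => mxStart v - c u))).min'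
        (Finset.insert_nonempty _ _))
    (m : ℕ) (hm : 0 < m)
    (ti tj : ℝ) (hij : ti < tj) :
    ∀ (τ : V → ℝ) (proc : V → Fin m), Feasible E c τ proc →
      ∃ v, tcp +
        (⌈(∑ u, max 0 (min (min (mnEnd u - ti) (c u)) (min (tj - mxStart u) (tj - ti))))
            / (m : ℝ) - (tj - ti)⌉ : ℤ) ≤ τ v + c v := by
  intro τ proc hfeas
  set σ : V → ℝ := fun v => (⌊τ v⌋ : ℝ)
  have hσ : Feasible E c σ proc := hfeas.floor hint
  obtain ⟨v, -, hv⟩ := Finset.univ.exists_max_image (fun u => σ u + c u) Finset.univ_nonempty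
  have hM : ∀ u, σ u + c u ≤ σ v + c v := fun u => hv u (Finset.mem_univ u)
  obtain ⟨l, hl, hltcp⟩ := htcp.1
  have htcpM : tcp ≤ σ v + c v := hltcp ▸ sum_map_le_of_isChain hint hσ.1 hM hσ.2.2 hl
  obtain ⟨n, hn⟩ := exists_natCast_eq_sum_map hint l
  obtain ⟨k, hk⟩ := hint v
  have hceil := Int.ceil_div_sub_le_of_le_mul (z := ⌊τ v⌋ + k - n) (Nat.cast_pos.mpr hm) <| by
    have := sum_forcedOverlap_le hacyc hrecE hrecS hij.le hσ hM htcpM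
    simpa [σ, hk, ← hltcp, hn] using this
  refine ⟨v, ?_⟩
  have := (Int.cast_le (R := ℝ)).mpr hceil
  push_cast at this
  linarith [Int.floor_le (τ v)]

/-- The Fernandez bound is valid: the optimal makespan on `m` processors is at least
`tcp + q` where `q = max over θ ⊆ [0, tcp) of ⌈R(θ)/m - |θ|⌉` (here stated for each
subinterval `θ = [ti, tj)`, with `R` computed from the `mnEnd`/`mxStart` windows for the
deadline `T = tcp`). -/
theorem stmt_12 {V : Type*} [Fintype V] [Nonempty V] [DecidableEq V]
    (E : V → V → Prop) [DecidableRel E]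
    (hacyc : ∀ v, ¬ Relation.TransGen E v v)
    (c : V → ℝ) (hpos : ∀ v, 0 < c v) (hint : ∀ v, ∃ k : ℕ, c v = (k : ℝ))
    (tcp : ℝ)
    (htcp : IsGreatest {x : ℝ | ∃ l : List V, l.Chain' E ∧ (l.map c).sum = x} tcp)
    (mnEnd mxStart : V → ℝ)
    (hrecE : ∀ u, mnEnd u = c u +
      (insert (0 : ℝ) ((Finset.univ.filter fun v => E v u).image mnEnd)).max'
        (Finset.insert_nonempty _ _))
    (hrecS : ∀ u, mxStart u =
      (insert (tcp - c u)
        ((Finset.univ.filter fun v => E u v).image (fun v => mxStart v - c u))).min'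
        (Finset.insert_nonempty _ _))
    (m : ℕ) (hm : 0 < m)
    (ti tj : ℝ) (h0 : 0 ≤ ti) (hij : ti < tj) (hjT : tj ≤ tcp) :
    ∀ (τ : V → ℝ) (proc : V → Fin m), Feasible E c τ proc →
      ∃ v, tcp +
        (⌈(∑ u, max 0 (min (min (mnEnd u - ti) (c u)) (min (tj - mxStart u) (tj - ti))))
            / (m : ℝ) - (tj - ti)⌉ : ℤ) ≤ τ v + c v :=
  stmt_12_general E hacyc c hint tcp htcp mnEnd mxStart hrecE hrecS m hm ti tj hij
end

section
/- The function R(θ) is superadditive on adjacent intervals: for t_1 < t_2 < t_3, R([t_1,t_3)) ≥ R([t_1,t_2)) + R([t_2,t_3)). -/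
lemma key_ineq (e s cu t₁ t₂ t₃ : ℝ) (hc : 0 < cu) (hcoh : e - cu ≤ s)
    (h12 : t₁ < t₂) (h23 : t₂ < t₃) :
    max 0 (min (min (e - t₁) cu) (min (t₂ - s) (t₂ - t₁))) +
    max 0 (min (min (e - t₂) cu) (min (t₃ - s) (t₃ - t₂))) ≤
    max 0 (min (min (e - t₁) cu) (min (t₃ - s) (t₃ - t₁))) := by
  set A1 := min (min (e - t₁) cu) (min (t₂ - s) (t₂ - t₁)) with hA1
  set A2 := min (min (e - t₂) cu) (min (t₃ - s) (t₃ - t₂)) with hA2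
  set A3 := min (min (e - t₁) cu) (min (t₃ - s) (t₃ - t₁)) with hA3
  have h1e : A1 ≤ e - t₁ := le_trans (min_le_left _ _) (min_le_left _ _)
  have h1c : A1 ≤ cu := le_trans (min_le_left _ _) (min_le_right _ _)
  have h1s : A1 ≤ t₂ - s := le_trans (min_le_right _ _) (min_le_left _ _)
  have h1t : A1 ≤ t₂ - t₁ := le_trans (min_le_right _ _) (min_le_right _ _)
  have h2e : A2 ≤ e - t₂ := le_trans (min_le_left _ _) (min_le_left _ _)
  have h2c : A2 ≤ cu := le_trans (min_le_left _ _) (min_le_right _ _)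
  have h2s : A2 ≤ t₃ - s := le_trans (min_le_right _ _) (min_le_left _ _)
  have h2t : A2 ≤ t₃ - t₂ := le_trans (min_le_right _ _) (min_le_right _ _)
  have h13 : A1 ≤ A3 := by
    apply le_min (le_min h1e h1c) (le_min (by linarith) (by linarith))
  have h23' : A2 ≤ A3 := by
    apply le_min (le_min (by linarith) h2c) (le_min h2s (by linarith))
  have hM3 : A3 ≤ max 0 A3 := le_max_right _ _
  rcases le_or_gt A1 0 with h1 | h1
  · have : max 0 A1 = 0 := max_eq_left h1
    rw [this, zero_add]
    exact max_le_max le_rfl h23'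
  rcases le_or_gt A2 0 with h2 | h2
  · have : max 0 A2 = 0 := max_eq_left h2
    rw [this, add_zero]
    exact max_le_max le_rfl h13
  have e1 : max 0 A1 = A1 := max_eq_right h1.le
  have e2 : max 0 A2 = A2 := max_eq_right h2.le
  have hsum : A1 + A2 ≤ A3 := by
    apply le_min (le_min (by linarith) (by linarith)) (le_min (by linarith) (by linarith))
  rw [e1, e2]
  exact hsum.trans hM3

/-- The minimum density function `R` is superadditive on adjacent intervals:
for `t₁ < t₂ < t₃`, `R([t₁,t₂)) + R([t₂,t₃)) ≤ R([t₁,t₃))`. -/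
theorem stmt_14 {V : Type*} [Fintype V]
    (c mnEnd mxStart : V → ℝ)
    (hpos : ∀ v, 0 < c v)
    -- each task's window is consistent: earliest end minus weight ≤ latest start
    (hcoh : ∀ u, mnEnd u - c u ≤ mxStart u)
    (R : ℝ → ℝ → ℝ)
    (hR : ∀ a b, R a b =
      ∑ u, max 0 (min (min (mnEnd u - a) (c u)) (min (b - mxStart u) (b - a))))
    (t₁ t₂ t₃ : ℝ) (h12 : t₁ < t₂) (h23 : t₂ < t₃) :
    R t₁ t₂ + R t₂ t₃ ≤ R t₁ t₃ := by
  simp only [hR, ← Finset.sum_add_distrib]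
  exact Finset.sum_le_sum fun u _ =>
    key_ineq (mnEnd u) (mxStart u) (c u) t₁ t₂ t₃ (hpos u) (hcoh u) h12 h23
end
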